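/- arXiv:2508.21338 — 9 statements merged into one kernel-verified Lean document; each statement's English description precedes it below -/
import Mathlib

section
/- For all n ≥ 0, the bivariate degenerate Hermite polynomial satisfies H_n(x,y|λ) = Σ_{k=0}^{⌊n/2⌋} n!/((n-2k)! k!) · (log(1+λ)/λ)^{n-k} · x^{n-2k} · y^k, and these polynomials satisfy the generating function identity (1+λ)^{(xt+yt²)/λ} = Σ_{n≥0} H_n(x,y|λ) tⁿ/n! as formal power series in t. -/
open Real Finset MeasureTheory

noncomputable def dH (l x y : ℝ) (n : ℕ) : ℝ :=
  ∑ k ∈ Finset.range (n / 2 + 1),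
    (Nat.factorial n : ℝ) / ((Nat.factorial (n - 2 * k) : ℝ) * (Nat.factorial k : ℝ)) *
      (Real.log (1 + l) / l) ^ (n - k) * x ^ (n - 2 * k) * y ^ k

/-!
Writing `c = log (1 + λ) / λ`, the generating function is `exp (c x t) * exp (c y t²)`.
Multiplying the two exponential series and collecting the terms `(c x t)^m (c y t²)^k` with
`m + 2k = n` gives exactly `H_n(x,y|λ) tⁿ / n!`; absolute convergence justifies the regrouping.
-/

/-- A Cauchy product in which the second factor carries weight two. -/
theorem hasSum_sum_range_div_two_mul_of_summable_norm {R : Type*} [NormedRing R]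
    [CompleteSpace R] {f g : ℕ → R} {a b : R} (hf : HasSum f a) (hg : HasSum g b)
    (hf_norm : Summable fun n => ‖f n‖) (hg_norm : Summable fun n => ‖g n‖) :
    HasSum (fun n => ∑ k ∈ range (n / 2 + 1), f (n - 2 * k) * g k) (a * b) := by
  have hprod : HasSum (fun p : ℕ × ℕ => f p.1 * g p.2) (a * b) :=
    hf.mul hg (summable_mul_of_summable_norm hf_norm hg_norm)
  -- `G` is the product family pushed forward along `(m, k) ↦ (m + 2k, k)`.
  set G : ℕ × ℕ → R := fun q => if 2 * q.2 ≤ q.1 then f (q.1 - 2 * q.2) * g q.2 else 0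
  have hshift_inj : Function.Injective fun p : ℕ × ℕ => (p.1 + 2 * p.2, p.2) := by
    rintro ⟨m, k⟩ ⟨m', k'⟩ h
    simp only [Prod.mk.injEq] at h ⊢
    omega
  have hG : HasSum G (a * b) := by
    refine (hshift_inj.hasSum_iff fun q hq => if_neg fun hle => ?_).1 ?_
    · exact hq ⟨(q.1 - 2 * q.2, q.2), by ext <;> simp only [Nat.sub_add_cancel hle]⟩
    · convert hprod using 2 with p
      simp
  refine hG.prod_fiberwise fun n => ?_
  have hfiber : HasSum (fun k => G (n, k)) (∑ k ∈ range (n / 2 + 1), G (n, k)) :=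
    hasSum_sum_of_ne_finset_zero fun k hk => if_neg (by rw [mem_range] at hk; omega)
  convert hfiber using 1
  refine sum_congr rfl fun k hk => (if_pos ?_).symm
  rw [mem_range] at hk
  omega

theorem dH_mul_pow_div_factorial (l x y t : ℝ) (n : ℕ) :
    dH l x y n * t ^ n / n.factorial =
      ∑ k ∈ range (n / 2 + 1),
        (x * t * (log (1 + l) / l)) ^ (n - 2 * k) / (n - 2 * k).factorial *
          ((y * t ^ 2 * (log (1 + l) / l)) ^ k / k.factorial) := by
  rw [dH, sum_mul, sum_div]
  refine sum_congr rfl fun k hk => ?_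
  obtain ⟨m, rfl⟩ : ∃ m, n = m + 2 * k := ⟨n - 2 * k, by rw [mem_range] at hk; omega⟩
  rw [show m + 2 * k - 2 * k = m by omega, show m + 2 * k - k = m + k by omega]
  field_simp
  ring

theorem stmt0_general (l x y : ℝ) :
    (∀ n : ℕ, dH l x y n =
      ∑ k ∈ Finset.range (n / 2 + 1),
        (Nat.factorial n : ℝ) / ((Nat.factorial (n - 2 * k) : ℝ) * (Nat.factorial k : ℝ)) *
          (Real.log (1 + l) / l) ^ (n - k) * x ^ (n - 2 * k) * y ^ k) ∧
    ∀ t : ℝ, HasSum (fun n : ℕ => dH l x y n * t ^ n / (Nat.factorial n : ℝ))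
      (Real.exp ((x * t + y * t ^ 2) * (Real.log (1 + l) / l))) := by
  refine ⟨fun n => rfl, fun t => ?_⟩
  have hexp (z : ℝ) : HasSum (fun n => z ^ n / n.factorial) (exp z) :=
    exp_eq_exp_ℝ ▸ NormedSpace.expSeries_div_hasSum_exp z
  have hprod := hasSum_sum_range_div_two_mul_of_summable_norm
    (hexp (x * t * (log (1 + l) / l))) (hexp (y * t ^ 2 * (log (1 + l) / l)))
    (NormedSpace.norm_expSeries_div_summable _) (NormedSpace.norm_expSeries_div_summable _)
  simp_rw [dH_mul_pow_div_factorial, add_mul, exp_add]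
  exact hprod

theorem stmt0 (l x y : ℝ) (hl : 0 < l) :
    (∀ n : ℕ, dH l x y n =
      ∑ k ∈ Finset.range (n / 2 + 1),
        (Nat.factorial n : ℝ) / ((Nat.factorial (n - 2 * k) : ℝ) * (Nat.factorial k : ℝ)) *
          (Real.log (1 + l) / l) ^ (n - k) * x ^ (n - 2 * k) * y ^ k) ∧
    ∀ t : ℝ, HasSum (fun n : ℕ => dH l x y n * t ^ n / (Nat.factorial n : ℝ))
      (Real.exp ((x * t + y * t ^ 2) * (Real.log (1 + l) / l))) :=
  stmt0_general l x y
end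

section
/- The bivariate degenerate Hermite polynomials satisfy the generalized heat equation: ∂/∂y H_n(x,y|λ) = (λ/log(1+λ)) · ∂²/∂x² H_n(x,y|λ), with initial condition H_n(x,0|λ) = (log(1+λ)/λ)ⁿ xⁿ. -/
/-! With `a = log (1 + λ) / λ`, the `k`-th term of `H_n` is `n! a^(n-k) · x^(n-2k)/(n-2k)! · y^k/k!`.
Differentiating once in `y` lowers `k` by one, differentiating twice in `x` lowers `n - 2k` by two,
so `∂_y` of the term `k + 1` and `∂_x²` of the term `k` are the same monomial, with coefficients
differing by the factor `a`. Hence `a ∂_y H_n = ∂_x² H_n` for every `a`. -/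

open Real Finset MeasureTheory

theorem iteratedDeriv_sum_mul_pow {ι 𝕜 : Type*} [NontriviallyNormedField 𝕜] (s : Finset ι)
    (c : ι → 𝕜) (e : ι → ℕ) (m : ℕ) :
    iteratedDeriv m (fun x => ∑ i ∈ s, c i * x ^ e i) =
      fun x => ∑ i ∈ s, c i * ((e i).descFactorial m * x ^ (e i - m)) := by
  induction m with
  | zero => simp
  | succ m ih =>
    ext x
    rw [iteratedDeriv_succ, ih, deriv_fun_sum fun i _ => by fun_prop]
    refine sum_congr rfl fun i _ => ?_
    rw [deriv_const_mul_field, deriv_const_mul_field, deriv_pow_field, Nat.descFactorial_succ,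
      Nat.sub_sub]
    push_cast
    ring

open scoped Nat in
noncomputable def heatCoeff (n k : ℕ) : ℝ :=
  (n ! : ℝ) / ((n - 2 * k)! * k !)

theorem succ_mul_heatCoeff_succ {n k : ℕ} (h : 2 * k + 2 ≤ n) :
    (k + 1) * heatCoeff n (k + 1) = (n - 2 * k).descFactorial 2 * heatCoeff n k := by
  obtain ⟨m, rfl⟩ := Nat.exists_eq_add_of_le h
  have e1 : 2 * k + 2 + m - 2 * (k + 1) = m := by omega
  have e2 : 2 * k + 2 + m - 2 * k = m + 2 := by omega
  rw [heatCoeff, heatCoeff, e1, e2, Nat.descFactorial_succ, Nat.descFactorial_one]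
  simp only [Nat.factorial_succ]
  push_cast
  field_simp
  ring

noncomputable def heatPoly (a : ℝ) (n : ℕ) (x y : ℝ) : ℝ :=
  ∑ k ∈ range (n / 2 + 1), heatCoeff n k * a ^ (n - k) * x ^ (n - 2 * k) * y ^ k

theorem heatPoly_zero_right (a : ℝ) (n : ℕ) (x : ℝ) : heatPoly a n x 0 = a ^ n * x ^ n := by
  rw [heatPoly, sum_eq_single_of_mem 0 (by simp) fun k _ hk => by simp [hk]]
  simp [heatCoeff, Nat.factorial_ne_zero]

theorem deriv_heatPoly_right (a : ℝ) (n : ℕ) (x y : ℝ) :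
    deriv (fun y => heatPoly a n x y) y = ∑ k ∈ range (n / 2 + 1),
      heatCoeff n k * a ^ (n - k) * x ^ (n - 2 * k) * (k * y ^ (k - 1)) := by
  rw [← iteratedDeriv_one]
  unfold heatPoly
  rw [iteratedDeriv_sum_mul_pow]
  simp only [Nat.descFactorial_one]

theorem iteratedDeriv_two_heatPoly_left (a : ℝ) (n : ℕ) (x y : ℝ) :
    iteratedDeriv 2 (fun x => heatPoly a n x y) x = ∑ k ∈ range (n / 2 + 1),
      heatCoeff n k * a ^ (n - k) * y ^ k * ((n - 2 * k).descFactorial 2 * x ^ (n - 2 * k - 2)) := by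
  have : (fun x => heatPoly a n x y) = fun x => ∑ k ∈ range (n / 2 + 1),
      heatCoeff n k * a ^ (n - k) * y ^ k * x ^ (n - 2 * k) := by
    ext x
    exact sum_congr rfl fun k _ => by ring
  rw [this, iteratedDeriv_sum_mul_pow]

theorem heatPoly_heat_equation (a : ℝ) (n : ℕ) (x y : ℝ) :
    a * deriv (fun y => heatPoly a n x y) y = iteratedDeriv 2 (fun x => heatPoly a n x y) x := by
  rw [deriv_heatPoly_right, iteratedDeriv_two_heatPoly_left, mul_sum, sum_range_succ',
    sum_range_succ]
  have top_term : (n - 2 * (n / 2)).descFactorial 2 = 0 :=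
    Nat.descFactorial_eq_zero_iff_lt.mpr (by omega)
  simp only [top_term, CharP.cast_eq_zero, zero_mul, mul_zero, add_zero]
  refine sum_congr rfl fun k hk => ?_
  have hk : 2 * k + 2 ≤ n := by rw [mem_range] at hk; omega
  rw [show n - k = n - (k + 1) + 1 by omega, show n - 2 * (k + 1) = n - 2 * k - 2 by omega,
    Nat.add_sub_cancel]
  push_cast
  linear_combination (a ^ (n - (k + 1)) * a * x ^ (n - 2 * k - 2) * y ^ k) *
    succ_mul_heatCoeff_succ hk

theorem dH_eq_heatPoly (l x y : ℝ) (n : ℕ) : dH l x y n = heatPoly (log (1 + l) / l) n x y :=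
  rfl

theorem stmt1 (l : ℝ) (hl : 0 < l) (n : ℕ) :
    (∀ x y : ℝ, deriv (fun y' => dH l x y' n) y =
      (l / Real.log (1 + l)) * iteratedDeriv 2 (fun x' => dH l x' y n) x) ∧
    ∀ x : ℝ, dH l x 0 n = (Real.log (1 + l) / l) ^ n * x ^ n := by
  have hL : Real.log (1 + l) / l ≠ 0 := (div_pos (Real.log_pos (by linarith)) hl).ne'
  simp only [dH_eq_heatPoly]
  refine ⟨fun x y => ?_, heatPoly_zero_right _ n⟩
  rw [← heatPoly_heat_equation, ← inv_div (Real.log (1 + l)) l, inv_mul_cancel_left₀ hL]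
end

section
/- For all n ≥ 1, the first x-derivative of the bivariate degenerate Hermite polynomial satisfies ∂_x H_n(x,y|λ) = n · (log(1+λ)/λ) · H_{n-1}(x,y|λ). -/
/-!
Differentiate term by term: the `k`-th term of `H_{n+1}` becomes `(n + 1) · L` times the `k`-th
term of `H_n`, where `L = log (1 + λ) / λ`, except for the constant term `k = (n + 1) / 2` that
occurs when `n + 1` is even, whose derivative vanishes.
-/

open Real Finset MeasureTheory

open scoped Nat

noncomputable def dHCoeff (n k : ℕ) : ℝ := (n ! : ℝ) / ((n - 2 * k)! * k !)

lemma dH_eq_sum_dHCoeff (l x y : ℝ) (n : ℕ) :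
    dH l x y n = ∑ k ∈ range (n / 2 + 1),
      dHCoeff n k * (log (1 + l) / l) ^ (n - k) * x ^ (n - 2 * k) * y ^ k :=
  rfl

lemma dH_zero (l x y : ℝ) : dH l x y 0 = 1 := by
  simp [dH]

lemma dHCoeff_succ_mul {n k : ℕ} (hk : 2 * k ≤ n) :
    dHCoeff (n + 1) k * (n + 1 - 2 * k : ℕ) = (n + 1) * dHCoeff n k := by
  rw [dHCoeff, dHCoeff, Nat.sub_add_comm hk, Nat.factorial_succ, Nat.factorial_succ]
  push_cast
  field_simp

lemma hasDerivAt_dH_succ (l x y : ℝ) (n : ℕ) :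
    HasDerivAt (fun x' => dH l x' y (n + 1))
      ((n + 1) * (log (1 + l) / l) * dH l x y n) x := by
  set L := log (1 + l) / l
  set D : ℕ → ℝ := fun k =>
    dHCoeff (n + 1) k * L ^ (n + 1 - k) * ((n + 1 - 2 * k : ℕ) * x ^ (n + 1 - 2 * k - 1)) * y ^ k
  have hterm : ∀ k ∈ range ((n + 1) / 2 + 1), HasDerivAt
      (fun x' => dHCoeff (n + 1) k * L ^ (n + 1 - k) * x' ^ (n + 1 - 2 * k) * y ^ k) (D k) x :=
    fun k _ => ((hasDerivAt_pow _ x).const_mul _).mul_const _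
  have hconst : ∀ k ∈ range ((n + 1) / 2 + 1), k ∉ range (n / 2 + 1) → D k = 0 := by
    intro k hk hk'
    simp only [mem_range] at hk hk'
    simp [D, show n + 1 - 2 * k = 0 by omega]
  have hD : ∀ k ∈ range (n / 2 + 1),
      D k = (n + 1) * L * (dHCoeff n k * L ^ (n - k) * x ^ (n - 2 * k) * y ^ k) := by
    intro k hk
    have h2k : 2 * k ≤ n := by rw [mem_range] at hk; omega
    simp only [D, show n + 1 - k = n - k + 1 by omega, show n + 1 - 2 * k - 1 = n - 2 * k by omega,
      pow_succ]
    linear_combination L ^ (n - k) * L * x ^ (n - 2 * k) * y ^ k * dHCoeff_succ_mul h2k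
  refine (HasDerivAt.fun_sum hterm).congr_deriv ?_
  rw [← sum_subset (range_subset_range.2 (by omega)) hconst, sum_congr rfl hD, ← mul_sum,
    dH_eq_sum_dHCoeff]

theorem stmt2_general (l : ℝ) (n : ℕ) (x y : ℝ) :
    deriv (fun x' => dH l x' y n) x =
      (n : ℝ) * (Real.log (1 + l) / l) * dH l x y (n - 1) := by
  cases n with
  | zero => simp [dH_zero]
  | succ n =>
    rw [(hasDerivAt_dH_succ l x y n).deriv]
    push_cast
    rfl

theorem stmt2 (l : ℝ) (hl : 0 < l) (n : ℕ) (hn : 1 ≤ n) (x y : ℝ) :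
    deriv (fun x' => dH l x' y n) x =
      (n : ℝ) * (Real.log (1 + l) / l) * dH l x y (n - 1) :=
  stmt2_general l n x y
end

section
/- For all natural numbers r with 2r ≤ n, the r-th y-derivative satisfies ∂_y^r H_n(x,y|λ) = (n!/(n-2r)!) · (log(1+λ)/λ)^r · H_{n-2r}(x,y|λ). -/
/-!
Write `c = log (1 + l) / l`. Differentiating `dH l x y (n + 2)` term by term in `y`, the
`k = 0` term dies and the `(k + 1)`-st term becomes `(n + 2) (n + 1) c` times the `k`-th term of
`dH l x y n`; so `∂_y H_{n+2} = (n + 2)(n + 1) c H_n`, and iterating `r` times telescopes the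
factorials. Indexing by `n + 2 * r` instead of `n - 2 * r` keeps natural subtraction out of the
induction.
-/

open Real Finset

lemma factorial_div_mul_succ_eq (n j : ℕ) :
    ((n + 2).factorial : ℝ) / ((n - 2 * j).factorial * (j + 1).factorial) * (j + 1 : ℕ) =
      (n + 2) * (n + 1) * (n.factorial / ((n - 2 * j).factorial * j.factorial)) := by
  rw [Nat.factorial_succ j, Nat.factorial_succ (n + 1), Nat.factorial_succ n]
  have : ((n - 2 * j).factorial : ℝ) ≠ 0 := by positivity
  have : (j.factorial : ℝ) ≠ 0 := by positivity
  push_cast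
  field_simp
  ring

lemma hasDerivAt_dH_add_two (l x y : ℝ) (n : ℕ) :
    HasDerivAt (fun y' => dH l x y' (n + 2))
      ((n + 2) * (n + 1) * (log (1 + l) / l) * dH l x y n) y := by
  refine (HasDerivAt.fun_sum fun k _ => ((hasDerivAt_pow k y).const_mul
    ((n + 2).factorial / ((n + 2 - 2 * k).factorial * k.factorial) * (log (1 + l) / l) ^ (n + 2 - k) *
      x ^ (n + 2 - 2 * k)))).congr_deriv ?_
  rw [show (n + 2) / 2 + 1 = n / 2 + 1 + 1 by omega, sum_range_succ', dH, mul_sum]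
  simp only [Nat.cast_zero, zero_mul, mul_zero, add_zero]
  refine sum_congr rfl fun j hj => ?_
  have hjn : j ≤ n := by have := mem_range.mp hj; omega
  rw [show n + 2 - (j + 1) = n - j + 1 by omega, show n + 2 - 2 * (j + 1) = n - 2 * j by omega,
    Nat.add_sub_cancel]
  linear_combination (log (1 + l) / l) ^ (n - j + 1) * x ^ (n - 2 * j) * y ^ j *
    factorial_div_mul_succ_eq n j

lemma iteratedDeriv_dH_add (l x : ℝ) (n r : ℕ) :
    iteratedDeriv r (fun y => dH l x y (n + 2 * r)) =
      fun y => ((n + 2 * r).factorial / n.factorial : ℝ) * (log (1 + l) / l) ^ r * dH l x y n := by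
  induction r generalizing n with
  | zero =>
    have : (n.factorial : ℝ) ≠ 0 := by positivity
    ext; simp [this]
  | succ r ih =>
    rw [iteratedDeriv_succ, show n + 2 * (r + 1) = n + 2 + 2 * r by ring, ih]
    ext y
    rw [((hasDerivAt_dH_add_two l x y n).const_mul _).deriv, Nat.factorial_succ (n + 1),
      Nat.factorial_succ n]
    have : (n.factorial : ℝ) ≠ 0 := by positivity
    push_cast
    field_simp
    ring

theorem stmt4_general (l : ℝ) (n r : ℕ) (hr : 2 * r ≤ n) (x y : ℝ) :
    iteratedDeriv r (fun y' => dH l x y' n) y =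
      ((Nat.factorial n : ℝ) / (Nat.factorial (n - 2 * r) : ℝ)) *
        (Real.log (1 + l) / l) ^ r * dH l x y (n - 2 * r) := by
  obtain ⟨m, rfl⟩ : ∃ m, n = m + 2 * r := ⟨n - 2 * r, by omega⟩
  rw [Nat.add_sub_cancel, iteratedDeriv_dH_add]

theorem stmt4 (l : ℝ) (hl : 0 < l) (n r : ℕ) (hr : 2 * r ≤ n) (x y : ℝ) :
    iteratedDeriv r (fun y' => dH l x y' n) y =
      ((Nat.factorial n : ℝ) / (Nat.factorial (n - 2 * r) : ℝ)) *
        (Real.log (1 + l) / l) ^ r * dH l x y (n - 2 * r) :=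
  stmt4_general l n r hr x y
end

section
/- For all n ≥ 0, the inverse expansion xⁿ = Σ_{r=0}^{⌊n/2⌋} ((-1)^r n!)/(r!(n-2r)!) · (log(1+λ)/λ)^{r-n} · y^r · H_{n-2r}(x,y|λ) holds. -/
open Real Finset MeasureTheory

/-!
Since `c ^ (n - k) x ^ (n - 2k) y ^ k = (c x) ^ (n - 2k) (c y) ^ k`, the polynomial
`H_n(x, y | λ)` is the classical two-variable Hermite polynomial `H_n(u, v)` evaluated at
`u = c x`, `v = c y` with `c = log (1 + λ) / λ`. For the classical polynomials, the right-hand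
side of the inversion formula is a double sum over `r` and `k`; collecting the terms with
`r + k = m` leaves the factor `∑_{r ≤ m} (-1) ^ r (m choose r) = 0 ^ m`, so only `u ^ n`
survives. Dividing by `c ^ n`, which is nonzero since `λ > 0`, gives the theorem.
-/

open scoped Nat

theorem sum_range_neg_one_pow_mul_choose {R : Type*} [CommRing R] (m : ℕ) :
    ∑ r ∈ range (m + 1), (-1 : R) ^ r * m.choose r = 0 ^ m := by
  simpa using (add_pow (-1 : R) 1 m).symm

section HermiteTwoVar

variable {K : Type*} [Field K]

def hermiteTwoVar (n : ℕ) (u v : K) : K :=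
  ∑ k ∈ range (n / 2 + 1), (n ! : K) / ((n - 2 * k)! * k !) * u ^ (n - 2 * k) * v ^ k

variable [CharZero K]

theorem factorial_div_mul_factorial_div_eq_mul_choose {n r k : ℕ} (h : 2 * (r + k) ≤ n) :
    (n ! : K) / (r ! * (n - 2 * r)!) * ((n - 2 * r)! / ((n - 2 * r - 2 * k)! * k !)) =
      n ! / ((r + k)! * (n - 2 * (r + k))!) * (r + k).choose r := by
  rw [Nat.cast_choose K (Nat.le_add_right r k), Nat.add_sub_cancel_left,
    show n - 2 * r - 2 * k = n - 2 * (r + k) by omega]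
  field_simp [Nat.factorial_ne_zero]

theorem pow_eq_sum_hermiteTwoVar (n : ℕ) (u v : K) :
    u ^ n = ∑ r ∈ range (n / 2 + 1),
      (-1) ^ r * n ! / (r ! * (n - 2 * r)!) * v ^ r * hermiteTwoVar (n - 2 * r) u v := by
  set f : ℕ → ℕ → K := fun r k =>
    (-1) ^ r * ((n ! : K) / (r ! * (n - 2 * r)!) * ((n - 2 * r)! / ((n - 2 * r - 2 * k)! * k !)))
      * u ^ (n - 2 * r - 2 * k) * v ^ (r + k)
  symm
  calc _ = ∑ r ∈ range (n / 2 + 1), ∑ k ∈ range (n / 2 + 1 - r), f r k := by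
        refine sum_congr rfl fun r hr => ?_
        rw [hermiteTwoVar, show (n - 2 * r) / 2 + 1 = n / 2 + 1 - r by grind, mul_sum]
        refine sum_congr rfl fun k _ => ?_
        simp only [f, pow_add]
        ring
    _ = ∑ m ∈ range (n / 2 + 1), ∑ r ∈ range (m + 1), f r (m - r) :=
        (sum_range_diag_flip _ f).symm
    _ = ∑ m ∈ range (n / 2 + 1),
          (n ! : K) / (m ! * (n - 2 * m)!) * u ^ (n - 2 * m) * v ^ m * 0 ^ m := by
        refine sum_congr rfl fun m hm => ?_
        rw [← sum_range_neg_one_pow_mul_choose, mul_sum]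
        refine sum_congr rfl fun r hr => ?_
        have hrm : r + (m - r) = m := by grind
        simp only [f]
        rw [factorial_div_mul_factorial_div_eq_mul_choose (by grind), hrm,
          show n - 2 * r - 2 * (m - r) = n - 2 * m by grind]
        ring
    _ = u ^ n := by
        rw [sum_range_succ']
        simp [Nat.factorial_ne_zero]

end HermiteTwoVar

theorem dH_eq_hermiteTwoVar (l x y : ℝ) (n : ℕ) :
    dH l x y n = hermiteTwoVar n (log (1 + l) / l * x) (log (1 + l) / l * y) := by
  refine sum_congr rfl fun k hk => ?_
  rw [mul_pow, mul_pow, show n - k = n - 2 * k + k by grind, pow_add]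
  ring

theorem stmt6 (l : ℝ) (hl : 0 < l) (n : ℕ) (x y : ℝ) :
    x ^ n =
      ∑ r ∈ Finset.range (n / 2 + 1),
        ((-1 : ℝ) ^ r * (Nat.factorial n : ℝ)) /
            ((Nat.factorial r : ℝ) * (Nat.factorial (n - 2 * r) : ℝ)) *
          (Real.log (1 + l) / l) ^ ((r : ℤ) - (n : ℤ)) * y ^ r * dH l x y (n - 2 * r) := by
  set c := log (1 + l) / l
  have hc : c ≠ 0 := (div_pos (log_pos (by linarith)) hl).ne'
  calc x ^ n = (c ^ n)⁻¹ * (c * x) ^ n := by rw [mul_pow, inv_mul_cancel_left₀ (pow_ne_zero n hc)]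
    _ = _ := by
      rw [pow_eq_sum_hermiteTwoVar n (c * x) (c * y), mul_sum]
      refine sum_congr rfl fun r _ => ?_
      rw [dH_eq_hermiteTwoVar, zpow_sub₀ hc, zpow_natCast, zpow_natCast, mul_pow]
      ring
end

section
/- For all n ≥ 1, the recurrence H_{n+1}(x,y|λ) = (log(1+λ)/λ)·x·H_n(x,y|λ) + 2n·(log(1+λ)/λ)·y·H_{n-1}(x,y|λ) holds. -/
open Real Finset MeasureTheory

/-!
With `c = log (1 + λ) / λ` we have `H_n(x, y | λ) = H_n(c x, c y)`, where `H_n` is the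
two-variable Hermite polynomial of Kampé de Fériet. The claim is therefore its classical
recurrence `H_{n+2} = x H_{n+1} + 2 (n + 1) y H_n`, which holds coefficientwise by Pascal's
rule and `(k + 1) C(n + 1, k + 1) = (n + 1) C(n, k)`.
-/

/-- `n! / ((n - 2k)! k!)`, written as `C(n, 2k) (2k)! / k!` so that it vanishes for `2k > n`. -/
noncomputable def hermiteKdFCoeff (n k : ℕ) : ℝ :=
  n.choose (2 * k) * (2 * k).factorial / k.factorial

noncomputable def hermiteKdFTerm (x y : ℝ) (n k : ℕ) : ℝ :=
  hermiteKdFCoeff n k * x ^ (n - 2 * k) * y ^ k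

noncomputable def hermiteKdF (x y : ℝ) (n : ℕ) : ℝ :=
  ∑ k ∈ range (n + 1), hermiteKdFTerm x y n k

lemma hermiteKdFCoeff_eq_zero {n k : ℕ} (h : n < 2 * k) : hermiteKdFCoeff n k = 0 := by
  simp [hermiteKdFCoeff, Nat.choose_eq_zero_of_lt h]

lemma hermiteKdFCoeff_eq_factorial_div {n k : ℕ} (h : 2 * k ≤ n) :
    hermiteKdFCoeff n k = n.factorial / ((n - 2 * k).factorial * k.factorial) := by
  rw [hermiteKdFCoeff, Nat.cast_choose ℝ h]
  field_simp

lemma hermiteKdFCoeff_succ_succ (m k : ℕ) :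
    hermiteKdFCoeff (m + 2) (k + 1) =
      hermiteKdFCoeff (m + 1) (k + 1) + 2 * (m + 1) * hermiteKdFCoeff m k := by
  have pascal : ((m + 2).choose (2 * k + 2) : ℝ) =
      (m + 1).choose (2 * k + 1) + (m + 1).choose (2 * k + 2) := by
    exact_mod_cast Nat.choose_succ_succ' (m + 1) (2 * k + 1)
  have absorb : ((m + 1).choose (2 * k + 1) : ℝ) * (2 * k + 1) = (m + 1) * m.choose (2 * k) := by
    exact_mod_cast (Nat.add_one_mul_choose_eq m (2 * k)).symm
  simp only [hermiteKdFCoeff, mul_add, mul_one, pascal, Nat.factorial_succ]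
  push_cast
  field_simp
  linear_combination (2 * (k : ℝ) + 2) * absorb

lemma hermiteKdFTerm_succ_succ (x y : ℝ) (m k : ℕ) :
    hermiteKdFTerm x y (m + 2) (k + 1) =
      x * hermiteKdFTerm x y (m + 1) (k + 1) + 2 * (m + 1) * y * hermiteKdFTerm x y m k := by
  have shift : x * x ^ (m + 1 - 2 * (k + 1)) = x ^ (m - 2 * k) ∨
      hermiteKdFCoeff (m + 1) (k + 1) = 0 := by
    rcases lt_or_ge (m + 1) (2 * (k + 1)) with h | h
    · exact Or.inr (hermiteKdFCoeff_eq_zero h)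
    · left
      rw [show m - 2 * k = m + 1 - 2 * (k + 1) + 1 by omega, pow_succ]
      ring
  simp only [hermiteKdFTerm, show m + 2 - 2 * (k + 1) = m - 2 * k by omega,
    hermiteKdFCoeff_succ_succ]
  rcases shift with h | h
  · rw [← h]; ring
  · rw [h]; ring

lemma hermiteKdF_eq_sum_range (x y : ℝ) {n N : ℕ} (hN : n / 2 < N) :
    hermiteKdF x y n = ∑ k ∈ range N, hermiteKdFTerm x y n k := by
  rw [hermiteKdF]
  have vanish {k : ℕ} (hk : n / 2 < k) : hermiteKdFTerm x y n k = 0 := by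
    simp [hermiteKdFTerm, hermiteKdFCoeff_eq_zero (show n < 2 * k by omega)]
  rw [← sum_subset (range_subset_range.mpr (show n / 2 + 1 ≤ n + 1 by omega)),
    ← sum_subset (range_subset_range.mpr (show n / 2 + 1 ≤ N by omega))]
  all_goals
    intro k _ hk
    exact vanish (by rw [mem_range] at hk; omega)

theorem hermiteKdF_succ_succ (x y : ℝ) (m : ℕ) :
    hermiteKdF x y (m + 2) = x * hermiteKdF x y (m + 1) + 2 * (m + 1) * y * hermiteKdF x y m := by
  have bottom : hermiteKdFTerm x y (m + 2) 0 = x * hermiteKdFTerm x y (m + 1) 0 := by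
    simp [hermiteKdFTerm, hermiteKdFCoeff, pow_succ, mul_comm]
  rw [hermiteKdF_eq_sum_range x y (show (m + 2) / 2 < m + 3 by omega),
    hermiteKdF_eq_sum_range x y (show (m + 1) / 2 < m + 3 by omega),
    hermiteKdF_eq_sum_range x y (show m / 2 < m + 2 by omega),
    sum_range_succ', sum_range_succ' _ (m + 2), bottom]
  simp only [hermiteKdFTerm_succ_succ, sum_add_distrib, ← mul_sum]
  ring

lemma dH_eq_hermiteKdF (l x y : ℝ) (n : ℕ) :
    dH l x y n = hermiteKdF (Real.log (1 + l) / l * x) (Real.log (1 + l) / l * y) n := by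
  rw [dH, hermiteKdF_eq_sum_range _ _ (Nat.lt_succ_self (n / 2))]
  refine sum_congr rfl fun k hk => ?_
  have hk : 2 * k ≤ n := by rw [mem_range] at hk; omega
  rw [hermiteKdFTerm, hermiteKdFCoeff_eq_factorial_div hk, mul_pow, mul_pow,
    show n - k = (n - 2 * k) + k by omega, pow_add]
  ring

theorem stmt13_general (l : ℝ) (n : ℕ) (x y : ℝ) :
    dH l x y (n + 1) =
      (Real.log (1 + l) / l) * x * dH l x y n +
        2 * n * (Real.log (1 + l) / l) * y * dH l x y (n - 1) := by
  simp only [dH_eq_hermiteKdF]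
  rcases n with _ | m
  · simp [hermiteKdF, hermiteKdFTerm, hermiteKdFCoeff, sum_range_succ]
  · rw [hermiteKdF_succ_succ]
    push_cast
    ring

theorem stmt13 (l : ℝ) (hl : 0 < l) (n : ℕ) (hn : 1 ≤ n) (x y : ℝ) :
    dH l x y (n + 1) =
      (Real.log (1 + l) / l) * x * dH l x y n +
        2 * n * (Real.log (1 + l) / l) * y * dH l x y (n - 1) :=
  stmt13_general l n x y
end

section
/- The operators M̂ = (log(1+λ)/λ)·x + 2y·∂_x and P̂ = (λ/log(1+λ))·∂_x acting on polynomials in x (with y, λ parameters) satisfy the quasi-monomiality relations: M̂ H_n(x,y|λ) = H_{n+1}(x,y|λ), P̂ H_n(x,y|λ) = n·H_{n-1}(x,y|λ), and the commutator [P̂, M̂] = 1 (identity operator). -/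
open Real Finset MeasureTheory

lemma dH_deriv (l y : ℝ) (n : ℕ) (x : ℝ) :
    deriv (fun x => dH l x y n) x =
      ∑ k ∈ Finset.range (n / 2 + 1),
        (Nat.factorial n : ℝ) / ((Nat.factorial (n - 2 * k) : ℝ) * (Nat.factorial k : ℝ)) *
          (Real.log (1 + l) / l) ^ (n - k) * ((n - 2 * k : ℕ) : ℝ) * x ^ (n - 2 * k - 1) * y ^ k := by
  have h : (fun x => dH l x y n) = fun x : ℝ => ∑ k ∈ Finset.range (n / 2 + 1),
      ((Nat.factorial n : ℝ) / ((Nat.factorial (n - 2 * k) : ℝ) * (Nat.factorial k : ℝ)) *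
        (Real.log (1 + l) / l) ^ (n - k) * y ^ k) * x ^ (n - 2 * k) := by
    funext x; unfold dH; exact Finset.sum_congr rfl fun k _ => by ring
  rw [h, deriv_fun_sum (fun k _ => ((differentiableAt_pow _).const_mul _))]
  refine Finset.sum_congr rfl fun k _ => ?_
  rw [deriv_const_mul _ (differentiableAt_pow _), deriv_pow_field]
  ring

lemma keyterm (c x y : ℝ) (n k : ℕ) (h : 2 * k + 2 ≤ n) :
    ((n + 1).factorial : ℝ) / ((n + 1 - 2 * (k + 1)).factorial * (k + 1).factorial) *
        c ^ (n + 1 - (k + 1)) * x ^ (n + 1 - 2 * (k + 1)) * y ^ (k + 1)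
      = c * x * ((n.factorial : ℝ) / ((n - 2 * (k + 1)).factorial * (k + 1).factorial) *
          c ^ (n - (k + 1)) * x ^ (n - 2 * (k + 1)) * y ^ (k + 1))
        + 2 * y * ((n.factorial : ℝ) / ((n - 2 * k).factorial * k.factorial) *
            c ^ (n - k) * ((n - 2 * k : ℕ) : ℝ) * x ^ (n - 2 * k - 1) * y ^ k) := by
  obtain ⟨m, rfl⟩ : ∃ m, n = 2 * k + 2 + m := ⟨n - (2 * k + 2), by omega⟩
  rw [show 2 * k + 2 + m + 1 - 2 * (k + 1) = m + 1 by omega,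
    show 2 * k + 2 + m - 2 * (k + 1) = m by omega,
    show 2 * k + 2 + m - 2 * k = m + 2 by omega,
    show m + 2 - 1 = m + 1 by omega,
    show 2 * k + 2 + m + 1 - (k + 1) = k + m + 2 by omega,
    show 2 * k + 2 + m - (k + 1) = k + m + 1 by omega,
    show 2 * k + 2 + m - k = k + m + 2 by omega,
    show 2 * k + 2 + m + 1 = (2 * k + 2 + m) + 1 by ring,
    show m + 2 = (m + 1) + 1 by ring]
  simp only [Nat.factorial_succ]
  have h1 : ((2 * k + 2 + m).factorial : ℝ) ≠ 0 := Nat.cast_ne_zero.mpr (Nat.factorial_ne_zero _)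
  have h2 : ((m).factorial : ℝ) ≠ 0 := Nat.cast_ne_zero.mpr (Nat.factorial_ne_zero _)
  have h3 : ((k).factorial : ℝ) ≠ 0 := Nat.cast_ne_zero.mpr (Nat.factorial_ne_zero _)
  push_cast
  field_simp
  ring

lemma raise_even (c x y : ℝ) (a : ℕ) :
    (∑ k ∈ Finset.range (a + 1), c * x *
        (((2 * a).factorial : ℝ) / (((2 * a - 2 * k).factorial : ℝ) * ((k).factorial : ℝ)) *
          c ^ (2 * a - k) * x ^ (2 * a - 2 * k) * y ^ k))
      + ∑ k ∈ Finset.range (a + 1), 2 * y *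
        (((2 * a).factorial : ℝ) / (((2 * a - 2 * k).factorial : ℝ) * ((k).factorial : ℝ)) *
          c ^ (2 * a - k) * ((2 * a - 2 * k : ℕ) : ℝ) * x ^ (2 * a - 2 * k - 1) * y ^ k)
      = ∑ k ∈ Finset.range (a + 1),
        ((2 * a + 1).factorial : ℝ) / (((2 * a + 1 - 2 * k).factorial : ℝ) * ((k).factorial : ℝ)) *
          c ^ (2 * a + 1 - k) * x ^ (2 * a + 1 - 2 * k) * y ^ k := by
  rw [Finset.sum_range_succ', Finset.sum_range_succ, Finset.sum_range_succ',
    show 2 * a - 2 * a = 0 by omega]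
  simp only [Nat.cast_zero, mul_zero, zero_mul, add_zero]
  have hT : (∑ k ∈ Finset.range a,
        ((2 * a + 1).factorial : ℝ) / (((2 * a + 1 - 2 * (k + 1)).factorial : ℝ) * ((k + 1).factorial : ℝ)) *
          c ^ (2 * a + 1 - (k + 1)) * x ^ (2 * a + 1 - 2 * (k + 1)) * y ^ (k + 1))
      = ∑ k ∈ Finset.range a,
        (c * x * (((2 * a).factorial : ℝ) / (((2 * a - 2 * (k + 1)).factorial : ℝ) * ((k + 1).factorial : ℝ)) *
            c ^ (2 * a - (k + 1)) * x ^ (2 * a - 2 * (k + 1)) * y ^ (k + 1))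
          + 2 * y * (((2 * a).factorial : ℝ) / (((2 * a - 2 * k).factorial : ℝ) * ((k).factorial : ℝ)) *
            c ^ (2 * a - k) * ((2 * a - 2 * k : ℕ) : ℝ) * x ^ (2 * a - 2 * k - 1) * y ^ k)) := by
    refine Finset.sum_congr rfl fun k hk => ?_
    exact keyterm c x y (2 * a) k (by have := Finset.mem_range.mp hk; omega)
  rw [hT, Finset.sum_add_distrib]
  have h0 : c * x * (((2 * a).factorial : ℝ) / (((2 * a - 0).factorial : ℝ) * ((Nat.factorial 0 : ℕ) : ℝ)) *
        c ^ (2 * a - 0) * x ^ (2 * a - 0) * y ^ 0)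
      = ((2 * a + 1).factorial : ℝ) / (((2 * a + 1 - 0).factorial : ℝ) * ((Nat.factorial 0 : ℕ) : ℝ)) *
        c ^ (2 * a + 1 - 0) * x ^ (2 * a + 1 - 0) * y ^ 0 := by
    have h1 : ((2 * a).factorial : ℝ) ≠ 0 := Nat.cast_ne_zero.mpr (Nat.factorial_ne_zero _)
    have h2 : ((2 * a + 1).factorial : ℝ) ≠ 0 := Nat.cast_ne_zero.mpr (Nat.factorial_ne_zero _)
    simp only [Nat.mul_zero, Nat.sub_zero, Nat.factorial_zero, Nat.cast_one, mul_one, pow_zero]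
    field_simp
    ring
  rw [h0]
  ring

lemma raise_odd (c x y : ℝ) (a : ℕ) :
    (∑ k ∈ Finset.range (a + 1), c * x *
        (((2 * a + 1).factorial : ℝ) / (((2 * a + 1 - 2 * k).factorial : ℝ) * ((k).factorial : ℝ)) *
          c ^ (2 * a + 1 - k) * x ^ (2 * a + 1 - 2 * k) * y ^ k))
      + ∑ k ∈ Finset.range (a + 1), 2 * y *
        (((2 * a + 1).factorial : ℝ) / (((2 * a + 1 - 2 * k).factorial : ℝ) * ((k).factorial : ℝ)) *
          c ^ (2 * a + 1 - k) * ((2 * a + 1 - 2 * k : ℕ) : ℝ) * x ^ (2 * a + 1 - 2 * k - 1) * y ^ k)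
      = ∑ k ∈ Finset.range (a + 1 + 1),
        ((2 * a + 1 + 1).factorial : ℝ) / (((2 * a + 1 + 1 - 2 * k).factorial : ℝ) * ((k).factorial : ℝ)) *
          c ^ (2 * a + 1 + 1 - k) * x ^ (2 * a + 1 + 1 - 2 * k) * y ^ k := by
  rw [Finset.sum_range_succ', Finset.sum_range_succ, Finset.sum_range_succ', Finset.sum_range_succ]
  have hT : (∑ k ∈ Finset.range a,
        ((2 * a + 1 + 1).factorial : ℝ) / (((2 * a + 1 + 1 - 2 * (k + 1)).factorial : ℝ) * ((k + 1).factorial : ℝ)) *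
          c ^ (2 * a + 1 + 1 - (k + 1)) * x ^ (2 * a + 1 + 1 - 2 * (k + 1)) * y ^ (k + 1))
      = ∑ k ∈ Finset.range a,
        (c * x * (((2 * a + 1).factorial : ℝ) / (((2 * a + 1 - 2 * (k + 1)).factorial : ℝ) * ((k + 1).factorial : ℝ)) *
            c ^ (2 * a + 1 - (k + 1)) * x ^ (2 * a + 1 - 2 * (k + 1)) * y ^ (k + 1))
          + 2 * y * (((2 * a + 1).factorial : ℝ) / (((2 * a + 1 - 2 * k).factorial : ℝ) * ((k).factorial : ℝ)) *
            c ^ (2 * a + 1 - k) * ((2 * a + 1 - 2 * k : ℕ) : ℝ) * x ^ (2 * a + 1 - 2 * k - 1) * y ^ k)) := by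
    refine Finset.sum_congr rfl fun k hk => ?_
    exact keyterm c x y (2 * a + 1) k (by have := Finset.mem_range.mp hk; omega)
  rw [hT, Finset.sum_add_distrib]
  have h0 : c * x * (((2 * a + 1).factorial : ℝ) / (((2 * a + 1 - 2 * 0).factorial : ℝ) * ((Nat.factorial 0 : ℕ) : ℝ)) *
        c ^ (2 * a + 1 - 0) * x ^ (2 * a + 1 - 2 * 0) * y ^ 0)
      = ((2 * a + 1 + 1).factorial : ℝ) / (((2 * a + 1 + 1 - 2 * 0).factorial : ℝ) * ((Nat.factorial 0 : ℕ) : ℝ)) *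
        c ^ (2 * a + 1 + 1 - 0) * x ^ (2 * a + 1 + 1 - 2 * 0) * y ^ 0 := by
    have h1 : ((2 * a + 1).factorial : ℝ) ≠ 0 := Nat.cast_ne_zero.mpr (Nat.factorial_ne_zero _)
    have h2 : ((2 * a + 1 + 1).factorial : ℝ) ≠ 0 := Nat.cast_ne_zero.mpr (Nat.factorial_ne_zero _)
    simp only [Nat.mul_zero, Nat.sub_zero, Nat.factorial_zero, Nat.cast_one, mul_one, pow_zero]
    field_simp
    ring
  have htop : 2 * y * (((2 * a + 1).factorial : ℝ) / (((2 * a + 1 - 2 * a).factorial : ℝ) * ((a).factorial : ℝ)) *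
        c ^ (2 * a + 1 - a) * ((2 * a + 1 - 2 * a : ℕ) : ℝ) * x ^ (2 * a + 1 - 2 * a - 1) * y ^ a)
      = ((2 * a + 1 + 1).factorial : ℝ) / (((2 * a + 1 + 1 - 2 * (a + 1)).factorial : ℝ) * ((a + 1).factorial : ℝ)) *
        c ^ (2 * a + 1 + 1 - (a + 1)) * x ^ (2 * a + 1 + 1 - 2 * (a + 1)) * y ^ (a + 1) := by
    rw [show 2 * a + 1 - 2 * a = 1 by omega, show 2 * a + 1 - a = a + 1 by omega,
      show 2 * a + 1 + 1 - 2 * (a + 1) = 0 by omega, show 2 * a + 1 + 1 - (a + 1) = a + 1 by omega,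
      show (1 : ℕ) - 1 = 0 by omega]
    simp only [Nat.factorial_succ, Nat.factorial_zero, Nat.factorial_one, Nat.cast_one, pow_zero,
      mul_one, one_mul]
    have h1 : ((2 * a + 1).factorial : ℝ) ≠ 0 := Nat.cast_ne_zero.mpr (Nat.factorial_ne_zero _)
    have h3 : ((a).factorial : ℝ) ≠ 0 := Nat.cast_ne_zero.mpr (Nat.factorial_ne_zero _)
    push_cast
    field_simp
    ring
  rw [h0, htop]
  ring

theorem stmt14 (l y : ℝ) (hl : 0 < l) :
    let M : (ℝ → ℝ) → (ℝ → ℝ) := fun f x =>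
      (Real.log (1 + l) / l) * x * f x + 2 * y * deriv f x
    let P : (ℝ → ℝ) → (ℝ → ℝ) := fun f x => (l / Real.log (1 + l)) * deriv f x
    (∀ n : ℕ, M (fun x => dH l x y n) = fun x => dH l x y (n + 1)) ∧
    (∀ n : ℕ, 1 ≤ n → P (fun x => dH l x y n) = fun x => (n : ℝ) * dH l x y (n - 1)) ∧
    (∀ f : ℝ → ℝ, ContDiff ℝ (⊤ : ℕ∞) f → ∀ x : ℝ, P (M f) x - M (P f) x = f x) := by
  have hlog : Real.log (1 + l) ≠ 0 := ne_of_gt (Real.log_pos (by linarith))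
  have hl0 : l ≠ 0 := ne_of_gt hl
  intro M P
  refine ⟨?_, ?_, ?_⟩
  · -- raising operator
    intro n
    funext x
    show (Real.log (1 + l) / l) * x * dH l x y n
        + 2 * y * deriv (fun x => dH l x y n) x = dH l x y (n + 1)
    rw [dH_deriv]
    unfold dH
    rw [Finset.mul_sum, Finset.mul_sum]
    rcases Nat.even_or_odd n with h | h
    · obtain ⟨a, rfl⟩ : ∃ a, n = 2 * a := by
        obtain ⟨r, hr⟩ := h; exact ⟨r, by omega⟩
      rw [show 2 * a / 2 = a by omega, show (2 * a + 1) / 2 = a by omega]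
      exact raise_even _ x y a
    · obtain ⟨a, rfl⟩ : ∃ a, n = 2 * a + 1 := by
        obtain ⟨r, hr⟩ := h; exact ⟨r, by omega⟩
      rw [show (2 * a + 1) / 2 = a by omega, show (2 * a + 1 + 1) / 2 = a + 1 by omega]
      exact raise_odd _ x y a
  · -- lowering operator
    intro n hn
    funext x
    show (l / Real.log (1 + l)) * deriv (fun x => dH l x y n) x = (n : ℝ) * dH l x y (n - 1)
    rw [dH_deriv, Finset.mul_sum]
    unfold dH
    rw [Finset.mul_sum]
    have hsub : Finset.range ((n - 1) / 2 + 1) ⊆ Finset.range (n / 2 + 1) := by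
      apply Finset.range_subset_range.mpr; omega
    rw [← Finset.sum_subset hsub]
    · refine Finset.sum_congr rfl fun k hk => ?_
      have hk' : 2 * k + 1 ≤ n := by
        have := Finset.mem_range.mp hk; omega
      obtain ⟨m, rfl⟩ : ∃ m, n = 2 * k + 1 + m := ⟨n - (2 * k + 1), by omega⟩
      rw [show 2 * k + 1 + m - 1 = 2 * k + m by omega, show 2 * k + 1 + m - 2 * k = m + 1 by omega,
        show m + 1 - 1 = m by omega, show 2 * k + 1 + m - k = k + m + 1 by omega,
        show 2 * k + m - 2 * k = m by omega, show 2 * k + m - k = k + m by omega,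
        show 2 * k + 1 + m = (2 * k + m) + 1 by ring, Nat.factorial_succ, Nat.factorial_succ,
        pow_succ]
      have h1 : ((2 * k + m).factorial : ℝ) ≠ 0 := Nat.cast_ne_zero.mpr (Nat.factorial_ne_zero _)
      have h2 : ((m).factorial : ℝ) ≠ 0 := Nat.cast_ne_zero.mpr (Nat.factorial_ne_zero _)
      have h3 : ((k).factorial : ℝ) ≠ 0 := Nat.cast_ne_zero.mpr (Nat.factorial_ne_zero _)
      push_cast
      field_simp
    · intro k hk1 hk2
      have : n - 2 * k = 0 := by
        have hA := Finset.mem_range.mp hk1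
        have hB : ¬ k < (n - 1) / 2 + 1 := fun h => hk2 (Finset.mem_range.mpr h)
        omega
      rw [this]
      norm_num
  · -- commutator
    intro f hf x
    show (l / Real.log (1 + l)) * deriv (fun x =>
          (Real.log (1 + l) / l) * x * f x + 2 * y * deriv f x) x
        - ((Real.log (1 + l) / l) * x * ((l / Real.log (1 + l)) * deriv f x)
          + 2 * y * deriv (fun x => (l / Real.log (1 + l)) * deriv f x) x) = f x
    have hf' : ContDiff ℝ ((⊤ : ℕ∞) : WithTop ℕ∞) f := hf.of_le (by simp)
    have hdf : Differentiable ℝ f := hf'.differentiable (by norm_num)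
    have hdf2 : ContDiff ℝ ((⊤ : ℕ∞) : WithTop ℕ∞) (deriv f) := (contDiff_infty_iff_deriv.mp hf').2
    have h1 : HasDerivAt f (deriv f x) x := (hdf x).hasDerivAt
    have h2 : HasDerivAt (deriv f) (deriv (deriv f) x) x :=
      (hdf2.differentiable (by norm_num) x).hasDerivAt
    set c := Real.log (1 + l) / l with hc
    have hM : HasDerivAt (fun x => c * x * f x + 2 * y * deriv f x)
        (c * f x + c * x * deriv f x + 2 * y * deriv (deriv f) x) x := by
      have := (((hasDerivAt_id x).const_mul c).mul h1).add (h2.const_mul (2 * y))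
      exact this.congr_deriv (by simp only [id_eq]; ring)
    have hP : HasDerivAt (fun x => (l / Real.log (1 + l)) * deriv f x)
        ((l / Real.log (1 + l)) * deriv (deriv f) x) x := h2.const_mul _
    rw [hM.deriv, hP.deriv, hc]
    field_simp
    ring
end

section
/- The bivariate degenerate Hermite polynomials satisfy the differential equation (x·∂_x + (2λ/log(1+λ))·y·∂_x² − n) H_n(x,y|λ) = 0 for all n ≥ 0. -/
/-!
Write `c = log (1 + λ) / λ` and `H_n = ∑ₖ aₖ x^(n-2k)`. The Euler operator `x ∂ₓ - n` multiplies the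
`k`-th monomial by `-2k`, while `2 y ∂ₓ²` lowers the degree by two; the coefficient recurrence
`c (k + 1) aₖ₊₁ = y (n - 2k) (n - 2k - 1) aₖ` says that `2 y ∂ₓ² H_n` is exactly `c` times
`∑ₖ 2k aₖ x^(n-2k)`, so the two contributions cancel after dividing by `c`.
-/

open Real Finset MeasureTheory

open scoped Nat

section SumMulPow

variable {ι : Type*} (s : Finset ι) (a : ι → ℝ) (m : ι → ℕ)

theorem deriv_sum_mul_pow :
    deriv (fun x => ∑ i ∈ s, a i * x ^ m i) = fun x => ∑ i ∈ s, a i * m i * x ^ (m i - 1) :=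
  funext fun x => (HasDerivAt.fun_sum fun i _ =>
    ((hasDerivAt_pow (m i) x).const_mul (a i))).deriv.trans <|
      sum_congr rfl fun _ _ => (mul_assoc _ _ _).symm

theorem mul_deriv_sum_mul_pow (x : ℝ) :
    x * deriv (fun x => ∑ i ∈ s, a i * x ^ m i) x = ∑ i ∈ s, m i * a i * x ^ m i := by
  rw [deriv_sum_mul_pow, mul_sum]
  refine sum_congr rfl fun i _ => ?_
  rcases eq_or_ne (m i) 0 with h | h
  · simp [h]
  · rw [← mul_pow_sub_one h x]
    ring

theorem iteratedDeriv_two_sum_mul_pow (x : ℝ) :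
    iteratedDeriv 2 (fun x => ∑ i ∈ s, a i * x ^ m i) x
      = ∑ i ∈ s, a i * m i * (m i - 1 : ℕ) * x ^ (m i - 1 - 1) := by
  rw [iteratedDeriv_succ, iteratedDeriv_one, deriv_sum_mul_pow, deriv_sum_mul_pow]

end SumMulPow

noncomputable def hermiteCoeff (c y : ℝ) (n k : ℕ) : ℝ :=
  n ! / ((n - 2 * k)! * k !) * c ^ (n - k) * y ^ k

noncomputable def hermiteSum (c x y : ℝ) (n : ℕ) : ℝ :=
  ∑ k ∈ range (n / 2 + 1), hermiteCoeff c y n k * x ^ (n - 2 * k)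

theorem hermiteCoeff_succ (c y : ℝ) {n k : ℕ} (h : 2 * (k + 1) ≤ n) :
    c * (k + 1) * hermiteCoeff c y n (k + 1)
      = y * (n - 2 * k : ℕ) * (n - 2 * k - 1 : ℕ) * hermiteCoeff c y n k := by
  obtain ⟨j, rfl⟩ := Nat.exists_eq_add_of_le' h
  simp only [hermiteCoeff, show j + 2 * (k + 1) - 2 * k = j + 2 by omega,
    show j + 2 - 1 = j + 1 by omega, show j + 2 * (k + 1) - 2 * (k + 1) = j by omega,
    show j + 2 * (k + 1) - k = (j + k + 1) + 1 by omega,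
    show j + 2 * (k + 1) - (k + 1) = j + k + 1 by omega, Nat.factorial_succ, pow_succ]
  push_cast
  field_simp
  ring

theorem mul_deriv_hermiteSum_sub (c x y : ℝ) (n : ℕ) :
    x * deriv (hermiteSum c · y n) x - n * hermiteSum c x y n
      = -∑ k ∈ range (n / 2 + 1), 2 * k * hermiteCoeff c y n k * x ^ (n - 2 * k) := by
  simp only [hermiteSum, mul_deriv_sum_mul_pow, mul_sum, ← sum_sub_distrib, ← sum_neg_distrib]
  refine sum_congr rfl fun k hk => ?_
  rw [Nat.cast_sub (by grind)]
  push_cast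
  ring

theorem two_mul_iteratedDeriv_two_hermiteSum (c x y : ℝ) (n : ℕ) :
    2 * y * iteratedDeriv 2 (hermiteSum c · y n) x
      = c * ∑ k ∈ range (n / 2 + 1), 2 * k * hermiteCoeff c y n k * x ^ (n - 2 * k) := by
  set b : ℕ → ℝ := fun k => 2 * k * hermiteCoeff c y n k * x ^ (n - 2 * k)
  -- the top monomial has degree at most one, so `∂ₓ²` kills it
  have top : n - 2 * (n / 2) = 0 ∨ n - 2 * (n / 2) = 1 := by omega
  have shift : ∀ k ∈ range (n / 2), 2 * y * (hermiteCoeff c y n k * (n - 2 * k : ℕ) *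
      (n - 2 * k - 1 : ℕ) * x ^ (n - 2 * k - 1 - 1)) = c * b (k + 1) := by
    intro k hk
    have h := hermiteCoeff_succ c y (n := n) (k := k) (by grind)
    simp only [b, show n - 2 * k - 1 - 1 = n - 2 * (k + 1) by omega]
    push_cast
    linear_combination (2 * x ^ (n - 2 * (k + 1))) * h.symm
  simp only [hermiteSum, iteratedDeriv_two_sum_mul_pow, mul_sum]
  rw [sum_range_succ, sum_congr rfl shift, ← mul_sum, ← mul_sum, sum_range_succ' b]
  rcases top with h | h <;> simp [h, b]

theorem hermiteSum_ode {c : ℝ} (hc : c ≠ 0) (x y : ℝ) (n : ℕ) :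
    x * deriv (hermiteSum c · y n) x + 2 / c * y * iteratedDeriv 2 (hermiteSum c · y n) x
      - n * hermiteSum c x y n = 0 := by
  have h1 := mul_deriv_hermiteSum_sub c x y n
  have h2 := two_mul_iteratedDeriv_two_hermiteSum c x y n
  field_simp
  linear_combination c * h1 + h2

theorem dH_eq_hermiteSum (l x y : ℝ) (n : ℕ) :
    dH l x y n = hermiteSum (log (1 + l) / l) x y n :=
  sum_congr rfl fun _ _ => by rw [hermiteCoeff]; ring

theorem stmt15 (l : ℝ) (hl : 0 < l) (n : ℕ) (x y : ℝ) :
    x * deriv (fun x' => dH l x' y n) x +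
        (2 * l / Real.log (1 + l)) * y * iteratedDeriv 2 (fun x' => dH l x' y n) x -
      (n : ℝ) * dH l x y n = 0 := by
  have hc : log (1 + l) / l ≠ 0 := (div_pos (log_pos (by linarith)) hl).ne'
  have hfun : (fun x' => dH l x' y n) = (hermiteSum (log (1 + l) / l) · y n) :=
    funext fun x' => dH_eq_hermiteSum l x' y n
  rw [hfun, dH_eq_hermiteSum, ← div_div_eq_mul_div]
  exact hermiteSum_ode hc x y n
end

section
/- For λ > 0 and m ≠ n, the degenerate Hermite polynomials are orthogonal: ∫_{-∞}^{∞} (1+λ)^{-x²/λ} H_n(x|λ) H_m(x|λ) dx = 0; and for m = n, ∫_{-∞}^{∞} (1+λ)^{-x²/λ} [H_n(x|λ)]² dx = √(πλ/log(1+λ)) · 2ⁿ n! · (log(1+λ)/λ)ⁿ. -/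
open Real Finset MeasureTheory

noncomputable def hermiteDeg (l : ℝ) (n : ℕ) (x : ℝ) : ℝ :=
  ∑ k ∈ Finset.range (n / 2 + 1),
    ((-1 : ℝ) ^ k * (Nat.factorial n : ℝ)) /
        ((Nat.factorial k : ℝ) * (Nat.factorial (n - 2 * k) : ℝ)) *
      (Real.log (1 + l) / l) ^ (n - k) * (2 * x) ^ (n - 2 * k)


/-! With `t = √(2 log(1+λ)/λ)` one has `H_n(x|λ) = tⁿ He_n(t x)`, where
`He_n = Polynomial.hermite n` is the probabilists' Hermite polynomial, and the substitution
`y = t x` turns the weight `(1+λ)^{-x²/λ}` into `e^{-y²/2}`. Since `He_{n+1} = X He_n - He_n'`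
and `X - d/dy` is adjoint to `d/dy` for this weight, `n` integrations by parts give
`∫ He_n q e^{-y²/2} = ∫ q⁽ⁿ⁾ e^{-y²/2}`, which vanishes for `deg q < n` and equals `n! √(2π)`
for `q = He_n`. -/

open Polynomial

section GaussianWeight

variable {R : Type*} [CommSemiring R] [Algebra R ℝ]

lemma integrable_aeval_mul_exp_neg_sq_div_two (p : R[X]) :
    Integrable fun x : ℝ => aeval x p * rexp (-(x ^ 2 / 2)) := by
  induction p using Polynomial.induction_on' with
  | add p q hp hq => simpa [add_mul] using hp.fun_add hq
  | monomial n a =>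
    have h := (integrable_rpow_mul_exp_neg_mul_sq (b := 1 / 2) (by norm_num)
      (s := n) (by linarith [n.cast_nonneg (α := ℝ)])).const_mul (algebraMap R ℝ a)
    refine h.congr (.of_forall fun x => ?_)
    simp only [aeval_monomial, Real.rpow_natCast]
    ring_nf

lemma integral_mul_aeval_mul_exp_neg_sq_div_two (p : R[X]) :
    ∫ x : ℝ, x * aeval x p * rexp (-(x ^ 2 / 2)) =
      ∫ x : ℝ, aeval x (derivative p) * rexp (-(x ^ 2 / 2)) := by
  have hw (x : ℝ) :
      HasDerivAt (fun y : ℝ => rexp (-(y ^ 2 / 2))) (-x * rexp (-(x ^ 2 / 2))) x := by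
    have := ((hasDerivAt_pow 2 x).div_const 2).fun_neg.exp
    convert this using 1
    push_cast
    ring
  have h := integral_mul_deriv_eq_deriv_mul_of_integrable (u := fun x => aeval x p)
    (fun x _ => p.hasDerivAt_aeval x) (fun x _ => hw x) ?_
    (integrable_aeval_mul_exp_neg_sq_div_two _) (integrable_aeval_mul_exp_neg_sq_div_two p)
  · rw [← neg_neg (∫ x : ℝ, aeval x (derivative p) * _), ← h, ← integral_neg]
    congr 1 with x
    ring
  · refine (integrable_aeval_mul_exp_neg_sq_div_two (X * p)).neg.congr (.of_forall fun x => ?_)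
    simp only [map_mul, aeval_X, Pi.neg_apply, Pi.mul_apply]
    ring

end GaussianWeight

open scoped Nat

lemma integral_aeval_hermite_mul (n : ℕ) (q : ℤ[X]) :
    ∫ x : ℝ, aeval x (hermite n) * aeval x q * rexp (-(x ^ 2 / 2)) =
      ∫ x : ℝ, aeval x (derivative^[n] q) * rexp (-(x ^ 2 / 2)) := by
  induction n generalizing q with
  | zero => simp [hermite_zero]
  | succ n ih =>
    have hX : Integrable fun x : ℝ => x * aeval x (hermite n * q) * rexp (-(x ^ 2 / 2)) :=
      (integrable_aeval_mul_exp_neg_sq_div_two (X * (hermite n * q))).congr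
        (.of_forall fun x => by simp only [map_mul, aeval_X, mul_assoc])
    have hint (p r : ℤ[X]) :
        Integrable fun x : ℝ => aeval x p * aeval x r * rexp (-(x ^ 2 / 2)) :=
      (integrable_aeval_mul_exp_neg_sq_div_two (p * r)).congr
        (.of_forall fun x => by simp only [map_mul])
    calc ∫ x : ℝ, aeval x (hermite (n + 1)) * aeval x q * rexp (-(x ^ 2 / 2))
        = ∫ x : ℝ, x * aeval x (hermite n * q) * rexp (-(x ^ 2 / 2)) -
            aeval x (derivative (hermite n)) * aeval x q * rexp (-(x ^ 2 / 2)) := by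
          congr 1 with x
          simp only [hermite_succ, map_sub, map_mul, aeval_X]
          ring
      _ = ∫ x : ℝ, aeval x (hermite n) * aeval x (derivative q) * rexp (-(x ^ 2 / 2)) := by
          rw [integral_sub hX (hint _ _), integral_mul_aeval_mul_exp_neg_sq_div_two,
            ← integral_sub (integrable_aeval_mul_exp_neg_sq_div_two _) (hint _ _)]
          congr 1 with x
          simp only [derivative_mul, map_add, map_mul]
          ring
      _ = ∫ x : ℝ, aeval x (derivative^[n + 1] q) * rexp (-(x ^ 2 / 2)) := by
          rw [Function.iterate_succ_apply, ← ih]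

lemma iterate_derivative_hermite_self (n : ℕ) : derivative^[n] (hermite n) = C (n ! : ℤ) := by
  rw [eq_C_of_natDegree_le_zero ((natDegree_iterate_derivative _ _).trans
    (by rw [natDegree_hermite, Nat.sub_self])), coeff_iterate_derivative, zero_add,
    coeff_hermite_self, Nat.descFactorial_self, nsmul_eq_mul, mul_one]

lemma integral_exp_neg_sq_div_two : ∫ x : ℝ, rexp (-(x ^ 2 / 2)) = √(2 * π) := by
  convert integral_gaussian (1 / 2) using 2 <;> ring_nf

theorem integral_aeval_hermite_mul_aeval_hermite (n m : ℕ) :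
    ∫ x : ℝ, aeval x (hermite n) * aeval x (hermite m) * rexp (-(x ^ 2 / 2)) =
      if n = m then n ! * √(2 * π) else 0 := by
  wlog hmn : m ≤ n generalizing n m
  · have h := this m n (by omega)
    rw [if_neg (by omega)] at h ⊢
    rw [← h]
    congr 1 with x
    ring
  rw [integral_aeval_hermite_mul]
  rcases hmn.lt_or_eq with hlt | rfl
  · rw [iterate_derivative_eq_zero (by rwa [natDegree_hermite]), if_neg hlt.ne']
    simp
  · rw [iterate_derivative_hermite_self, if_pos rfl]
    simp [integral_const_mul, integral_exp_neg_sq_div_two]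

lemma Nat.factorial_two_mul (k : ℕ) : (2 * k)! = 2 ^ k * k ! * (2 * k - 1)‼ := by
  cases k with
  | zero => rfl
  | succ j =>
    rw [show 2 * (j + 1) - 1 = 2 * j + 1 by omega, show 2 * (j + 1) = 2 * j + 1 + 1 by omega,
      Nat.factorial_eq_mul_doubleFactorial, show 2 * j + 1 + 1 = 2 * (j + 1) by omega,
      Nat.doubleFactorial_two_mul]

lemma coeff_hermite_sub_two_mul {n k : ℕ} (hk : 2 * k ≤ n) :
    ((hermite n).coeff (n - 2 * k) : ℝ) = (-1) ^ k * n ! / (k ! * (n - 2 * k)! * 2 ^ k) := by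
  rw [coeff_hermite_of_even_add ⟨n - k, by omega⟩, show n - (n - 2 * k) = 2 * k by omega,
    Nat.mul_div_cancel_left _ two_pos, Nat.choose_symm hk, eq_div_iff (by positivity)]
  have h := congrArg (Nat.cast (R := ℝ)) (Nat.choose_mul_factorial_mul_factorial hk)
  rw [Nat.factorial_two_mul] at h
  push_cast at h ⊢
  linear_combination (-1) ^ k * h

lemma aeval_hermite_eq_sum (n : ℕ) (z : ℝ) :
    aeval z (hermite n) =
      ∑ k ∈ range (n / 2 + 1), ((hermite n).coeff (n - 2 * k) : ℝ) * z ^ (n - 2 * k) := by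
  have hinj : Set.InjOn (fun k => n - 2 * k) (range (n / 2 + 1) : Set ℕ) := by
    intro a ha b hb (hab : n - 2 * a = n - 2 * b)
    simp only [coe_range, Set.mem_Iio] at ha hb
    omega
  have hodd {i : ℕ} (hi : i ∈ range (n + 1))
      (hni : i ∉ (range (n / 2 + 1)).image (n - 2 * ·)) : Odd (n + i) := by
    have := mem_range.1 hi
    refine Nat.not_even_iff_odd.1 fun ⟨r, hr⟩ => hni (mem_image.2 ⟨n - r, ?_, by omega⟩)
    exact mem_range.2 (by omega)
  rw [aeval_eq_sum_range, natDegree_hermite,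
    ← sum_image (f := fun i => ((hermite n).coeff i : ℝ) * z ^ i) hinj]
  simp only [zsmul_eq_mul]
  refine (sum_subset (fun i hi => ?_) fun i hi hni => ?_).symm
  · obtain ⟨k, -, rfl⟩ := mem_image.1 hi
    exact mem_range.2 (by omega)
  · rw [coeff_hermite_of_odd_add (hodd hi hni), Int.cast_zero, zero_mul]

lemma hermiteDeg_eq_mul_aeval_hermite {l t : ℝ} (ht : t ^ 2 = 2 * (Real.log (1 + l) / l))
    (n : ℕ) (x : ℝ) : hermiteDeg l n x = t ^ n * aeval (t * x) (hermite n) := by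
  rw [aeval_hermite_eq_sum, hermiteDeg, mul_sum]
  refine sum_congr rfl fun k hk => ?_
  have hk : 2 * k ≤ n := by have := mem_range.1 hk; omega
  have hpow : t ^ n * t ^ (n - 2 * k) =
      2 ^ k * 2 ^ (n - 2 * k) * (Real.log (1 + l) / l) ^ (n - k) := by
    rw [← pow_add, show n + (n - 2 * k) = 2 * (n - k) by omega, pow_mul, ht, mul_pow, ← pow_add,
      show k + (n - 2 * k) = n - k by omega]
  rw [coeff_hermite_sub_two_mul hk, mul_pow, mul_pow]
  field_simp
  linear_combination -x ^ (n - 2 * k) * hpow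

lemma integral_exp_mul_hermiteDeg_mul_hermiteDeg {l t : ℝ}
    (ht : t ^ 2 = 2 * (Real.log (1 + l) / l)) (ht0 : 0 < t) (n m : ℕ) :
    ∫ x : ℝ, rexp (-(x ^ 2 * (Real.log (1 + l) / l))) * hermiteDeg l n x * hermiteDeg l m x =
      t ^ (n + m) / t * if n = m then n ! * √(2 * π) else 0 := by
  calc ∫ x : ℝ, rexp (-(x ^ 2 * (Real.log (1 + l) / l))) * hermiteDeg l n x * hermiteDeg l m x
      = ∫ x : ℝ, t ^ (n + m) * ((fun y : ℝ => aeval y (hermite n) * aeval y (hermite m) *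
          rexp (-(y ^ 2 / 2))) (t * x)) := by
        congr 1 with x
        dsimp only
        rw [hermiteDeg_eq_mul_aeval_hermite ht, hermiteDeg_eq_mul_aeval_hermite ht,
          show (t * x) ^ 2 / 2 = x ^ 2 * (Real.log (1 + l) / l) by rw [mul_pow, ht]; ring, pow_add]
        ring
    _ = t ^ (n + m) / t * if n = m then n ! * √(2 * π) else 0 := by
        rw [integral_const_mul, Measure.integral_comp_mul_left (fun y : ℝ =>
            aeval y (hermite n) * aeval y (hermite m) * rexp (-(y ^ 2 / 2))),
          integral_aeval_hermite_mul_aeval_hermite, abs_of_pos (inv_pos.2 ht0), smul_eq_mul]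
        ring

theorem stmt17 (l : ℝ) (hl : 0 < l) :
    (∀ m n : ℕ, m ≠ n →
      ∫ x : ℝ, Real.exp (-(x ^ 2 * (Real.log (1 + l) / l))) *
          hermiteDeg l n x * hermiteDeg l m x = 0) ∧
    (∀ n : ℕ,
      ∫ x : ℝ, Real.exp (-(x ^ 2 * (Real.log (1 + l) / l))) * (hermiteDeg l n x) ^ 2 =
        Real.sqrt (Real.pi * l / Real.log (1 + l)) * 2 ^ n * (Nat.factorial n : ℝ) *
          (Real.log (1 + l) / l) ^ n) := by
  have hc : 0 < Real.log (1 + l) / l := div_pos (Real.log_pos (by linarith)) hl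
  set t := √(2 * (Real.log (1 + l) / l))
  have ht : t ^ 2 = 2 * (Real.log (1 + l) / l) := Real.sq_sqrt (by positivity)
  have ht0 : 0 < t := Real.sqrt_pos.2 (by positivity)
  refine ⟨fun m n hmn => ?_, fun n => ?_⟩
  · rw [integral_exp_mul_hermiteDeg_mul_hermiteDeg ht ht0, if_neg hmn.symm, mul_zero]
  · have hsqrt : √(2 * π) / t = √(π * l / Real.log (1 + l)) := by
      rw [← Real.sqrt_div' _ (by positivity)]
      congr 1
      field_simp
    simp_rw [sq (hermiteDeg l n _), ← mul_assoc]
    rw [integral_exp_mul_hermiteDeg_mul_hermiteDeg ht ht0, if_pos rfl, ← two_mul, pow_mul, ht,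
      ← hsqrt]
    ring
end
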